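/- arXiv:1102.1984 — 3 statements merged into one kernel-verified Lean document; each statement's English description precedes it below -/
import Mathlib

section
/- Let n ≥ 1 and let α be a tight stable n-set in ZMod (2n+2). Then α has exactly one outer neighbor: there exists a unique stable n-set β such that β is an outer neighbor of α. -/
/-!
Common definitions: stable n-sets in `ZMod (2*n+2)`, tight/loose sets, shifts,
outer neighbors, parity, the sets `P_i`, and adjacency in the stable Kneser
graph `SG_{n,2}` (two stable n-sets are adjacent iff they are disjoint).
-/

instance (n : ℕ) : NeZero (2 * n + 2) := ⟨by omega⟩

/-- A stable n-set: a finite subset of `ZMod (2n+2)` of cardinality `n`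
containing no two (cyclically) consecutive elements. -/
def IsStable (n : ℕ) (α : Finset (ZMod (2 * n + 2))) : Prop :=
  α.card = n ∧ ∀ i : ZMod (2 * n + 2), ¬(i ∈ α ∧ i + 1 ∈ α)

/-- A set is tight if it has the form `{i, i+2, i+4, …, i+2(n-1)}`. -/
def IsTight (n : ℕ) (α : Finset (ZMod (2 * n + 2))) : Prop :=
  ∃ i : ZMod (2 * n + 2), α = (Finset.range n).image (fun k : ℕ => i + 2 * (k : ZMod (2 * n + 2)))

/-- `α ⊕ j`, the shift of `α` by `j`. -/
def oplus (n : ℕ) (α : Finset (ZMod (2 * n + 2))) (j : ZMod (2 * n + 2)) :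
    Finset (ZMod (2 * n + 2)) :=
  α.image (fun a => a + j)

/-- `α ⊖ j`, the shift of `α` by `-j`. -/
def ominus (n : ℕ) (α : Finset (ZMod (2 * n + 2))) (j : ZMod (2 * n + 2)) :
    Finset (ZMod (2 * n + 2)) :=
  α.image (fun a => a - j)

/-- `β` is an outer neighbor of `α`: they are disjoint and
`β = ((α \ {a}) ⊕ 1) ∪ {a + 2}` for some `a ∈ α`. -/
def OuterNbr (n : ℕ) (α β : Finset (ZMod (2 * n + 2))) : Prop :=
  Disjoint α β ∧ ∃ a ∈ α, β = oplus n (α.erase a) 1 ∪ {a + 2}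

/-- The parity of an element of `ZMod (2n+2)`: its image in `ZMod 2` under the
natural ring homomorphism. -/
def parity (n : ℕ) (a : ZMod (2 * n + 2)) : ZMod 2 :=
  ZMod.castHom (show (2 : ℕ) ∣ 2 * n + 2 from ⟨n + 1, by ring⟩) (ZMod 2) a

/-- Adjacency in the stable Kneser graph `SG_{n,2}`: two distinct stable n-sets
are adjacent iff they are disjoint. -/
def SGAdj (n : ℕ) (α β : Finset (ZMod (2 * n + 2))) : Prop :=
  IsStable n α ∧ IsStable n β ∧ α ≠ β ∧ Disjoint α β

/-- `P_i`: stable n-sets with exactly `i` even elements and `n - i` odd elements. -/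
def Pset (n i : ℕ) : Set (Finset (ZMod (2 * n + 2))) :=
  {α | IsStable n α ∧ (α.filter fun a => parity n a = 0).card = i ∧
       (α.filter fun a => parity n a = 1).card = n - i}

/-!
Write the tight set as `i, i + 2, …, i + 2(n-1)`. An outer neighbor built from `a` contains
`a + 2`, so disjointness forces `a + 2 ∉ α`, i.e. `a` is the last element `i + 2(n-1)`; this gives
uniqueness. For that `a` the neighbor is `{i + 1, i + 3, …, i + 2n - 3} ∪ {i + 2n}`, and all its
required properties reduce to two facts in `ZMod (2n+2)`: `2a` never equals `2b + 1`, and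
`k ↦ 2k` is injective on `2k < 2n + 2`.
-/

open Finset

variable {N : ℕ}

theorem ZMod.two_mul_ne_two_mul_add_one (hN : 2 ∣ N) (a b : ZMod N) : 2 * a ≠ 2 * b + 1 := by
  intro h
  have h2 := congrArg (ZMod.castHom hN (ZMod 2)) h
  simp only [map_mul, map_add, map_one, map_ofNat] at h2
  generalize ZMod.castHom hN (ZMod 2) a = x at h2
  generalize ZMod.castHom hN (ZMod 2) b = y at h2
  revert x y
  decide

theorem ZMod.two_mul_natCast_inj {k m : ℕ} (hk : 2 * k < N) (hm : 2 * m < N) :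
    2 * (k : ZMod N) = 2 * m ↔ k = m := by
  refine ⟨fun h => ?_, fun h => h ▸ rfl⟩
  have h' : ((2 * k : ℕ) : ZMod N) = ((2 * m : ℕ) : ZMod N) := by push_cast; exact h
  rw [ZMod.natCast_eq_natCast_iff', Nat.mod_eq_of_lt hk, Nat.mod_eq_of_lt hm] at h'
  omega

def stepTwo (i : ZMod N) (m : ℕ) : Finset (ZMod N) :=
  (range m).image fun k : ℕ => i + 2 * (k : ZMod N)

section stepTwo

variable {i x : ZMod N} {m : ℕ}

theorem mem_stepTwo : x ∈ stepTwo i m ↔ ∃ k < m, i + 2 * (k : ZMod N) = x := by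
  simp [stepTwo]

theorem stepTwo_succ : stepTwo i (m + 1) = insert (i + 2 * (m : ZMod N)) (stepTwo i m) := by
  rw [stepTwo, range_add_one, image_insert, stepTwo]

theorem add_two_mul_notMem_stepTwo {j : ℕ} (hmj : m ≤ j) (hj : 2 * j < N) :
    i + 2 * (j : ZMod N) ∉ stepTwo i m := by
  rw [mem_stepTwo]
  rintro ⟨k, hk, h⟩
  have := (ZMod.two_mul_natCast_inj (by omega) hj).1 (add_left_cancel h)
  omega

theorem card_stepTwo (h : 2 * m ≤ N) : #(stepTwo i m) = m := by
  induction m with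
  | zero => rfl
  | succ m ih =>
    rw [stepTwo_succ, card_insert_of_notMem (add_two_mul_notMem_stepTwo le_rfl (by omega)),
      ih (by omega)]

theorem image_add_stepTwo (c : ZMod N) : (stepTwo i m).image (· + c) = stepTwo (i + c) m := by
  rw [stepTwo, stepTwo, image_image]
  congr 1
  funext k
  simp only [Function.comp_apply]
  ring

theorem erase_stepTwo_succ (h : 2 * m < N) :
    (stepTwo i (m + 1)).erase (i + 2 * (m : ZMod N)) = stepTwo i m := by
  rw [stepTwo_succ, erase_insert (add_two_mul_notMem_stepTwo le_rfl h)]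

theorem eq_of_add_two_notMem_stepTwo_succ {a : ZMod N} (ha : a ∈ stepTwo i (m + 1))
    (ha2 : a + 2 ∉ stepTwo i (m + 1)) : a = i + 2 * (m : ZMod N) := by
  obtain ⟨k, hk, rfl⟩ := mem_stepTwo.1 ha
  obtain rfl : k = m := by
    by_contra hkm
    exact ha2 (mem_stepTwo.2 ⟨k + 1, by omega, by push_cast; ring⟩)
  rfl

theorem disjoint_stepTwo_add_one (hN : 2 ∣ N) (l : ℕ) :
    Disjoint (stepTwo i m) (stepTwo (i + 1) l) := by
  rw [disjoint_left]
  simp only [mem_stepTwo]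
  rintro _ ⟨k, -, rfl⟩ ⟨l', -, h⟩
  exact ZMod.two_mul_ne_two_mul_add_one hN k l' (by linear_combination -h)

theorem add_one_notMem_stepTwo_of_mem (hN : 2 ∣ N) (hx : x ∈ stepTwo i m) :
    x + 1 ∉ stepTwo i m := by
  rw [mem_stepTwo] at *
  obtain ⟨k, -, rfl⟩ := hx
  rintro ⟨l, -, h⟩
  exact ZMod.two_mul_ne_two_mul_add_one hN l k (by linear_combination h)

theorem add_two_mul_notMem_stepTwo_add_one (hN : 2 ∣ N) (j : ℕ) :
    i + 2 * (j : ZMod N) ∉ stepTwo (i + 1) m :=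
  disjoint_left.1 (disjoint_stepTwo_add_one hN m) (stepTwo_succ (m := j) ▸ mem_insert_self _ _)

theorem image_erase_stepTwo_union (hm : 2 * m < N) :
    ((stepTwo i (m + 1)).erase (i + 2 * (m : ZMod N))).image (· + 1) ∪ {i + 2 * (m : ZMod N) + 2}
      = insert (i + 2 * ((m + 1 : ℕ) : ZMod N)) (stepTwo (i + 1) m) := by
  rw [erase_stepTwo_succ hm, image_add_stepTwo, union_comm, ← insert_eq]
  congr 1
  push_cast
  ring

end stepTwo

section outerNeighbor

variable {i : ZMod N} {m : ℕ}

theorem card_insert_stepTwo_add_one (hN : 2 ∣ N) (hm : 2 * (m + 1) < N) :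
    #(insert (i + 2 * ((m + 1 : ℕ) : ZMod N)) (stepTwo (i + 1) m)) = m + 1 := by
  rw [card_insert_of_notMem (add_two_mul_notMem_stepTwo_add_one hN _), card_stepTwo (by omega)]

theorem disjoint_stepTwo_insert_stepTwo_add_one (hN : 2 ∣ N) (hm : 2 * (m + 1) < N) :
    Disjoint (stepTwo i (m + 1))
      (insert (i + 2 * ((m + 1 : ℕ) : ZMod N)) (stepTwo (i + 1) m)) := by
  rw [disjoint_insert_right]
  exact ⟨add_two_mul_notMem_stepTwo le_rfl hm, disjoint_stepTwo_add_one hN m⟩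

theorem add_one_notMem_insert_stepTwo_add_one_of_mem (hN : 2 ∣ N) (hm : 2 * (m + 1) < N)
    {j : ZMod N} (hj : j ∈ insert (i + 2 * ((m + 1 : ℕ) : ZMod N)) (stepTwo (i + 1) m)) :
    j + 1 ∉ insert (i + 2 * ((m + 1 : ℕ) : ZMod N)) (stepTwo (i + 1) m) := by
  have : Fact (1 < N) := ⟨by omega⟩
  have hlast : i + 2 * ((m + 1 : ℕ) : ZMod N) = (i + 1) + 2 * (m : ZMod N) + 1 := by
    push_cast; ring
  have hnext : i + 2 * ((m + 1 : ℕ) : ZMod N) + 1 = (i + 1) + 2 * ((m + 1 : ℕ) : ZMod N) := by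
    ring
  intro hj1
  rw [mem_insert] at hj hj1
  rcases hj with hj | hj <;> rcases hj1 with hj1 | hj1
  · subst hj
    exact one_ne_zero (left_eq_add.1 hj1.symm)
  · subst hj
    exact add_two_mul_notMem_stepTwo (Nat.le_succ m) hm (hnext ▸ hj1)
  · rw [hlast, add_left_inj] at hj1
    exact add_two_mul_notMem_stepTwo le_rfl (by omega) (hj1 ▸ hj)
  · exact add_one_notMem_stepTwo_of_mem hN hj hj1

end outerNeighbor

theorem tight_unique_outer_neighbor_general (n : ℕ) (hn : 1 ≤ n)
    (α : Finset (ZMod (2 * n + 2))) (hαt : IsTight n α) :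
    ∃! β : Finset (ZMod (2 * n + 2)), IsStable n β ∧ OuterNbr n α β := by
  obtain ⟨m, rfl⟩ : ∃ m, n = m + 1 := ⟨n - 1, by omega⟩
  obtain ⟨i, hi⟩ := hαt
  change α = stepTwo i (m + 1) at hi
  subst hi
  have hN : 2 ∣ 2 * (m + 1) + 2 := ⟨m + 2, by ring⟩
  have hm : 2 * (m + 1) < 2 * (m + 1) + 2 := by omega
  have hβ := image_erase_stepTwo_union (i := i) (m := m) (by omega)
  have hlast : i + 2 * (m : ZMod _) ∈ stepTwo i (m + 1) := stepTwo_succ ▸ mem_insert_self _ _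
  have hstable : IsStable (m + 1) (insert (i + 2 * ((m + 1 : ℕ) : ZMod _)) (stepTwo (i + 1) m)) :=
    ⟨card_insert_stepTwo_add_one hN hm,
      fun j hj => add_one_notMem_insert_stepTwo_add_one_of_mem hN hm hj.1 hj.2⟩
  refine ⟨_, ⟨hstable, disjoint_stepTwo_insert_stepTwo_add_one hN hm, _, hlast, hβ.symm⟩, ?_⟩
  rintro β ⟨-, hdisj, a, ha, rfl⟩
  have ha2 : a + 2 ∉ stepTwo i (m + 1) :=
    disjoint_right.1 hdisj (mem_union_right _ (mem_singleton_self _))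
  rw [eq_of_add_two_notMem_stepTwo_succ ha ha2]
  exact hβ

/-- Every tight stable n-set has a unique outer neighbor. -/
theorem tight_unique_outer_neighbor (n : ℕ) (hn : 1 ≤ n)
    (α : Finset (ZMod (2 * n + 2))) (hα : IsStable n α) (hαt : IsTight n α) :
    ∃! β : Finset (ZMod (2 * n + 2)), IsStable n β ∧ OuterNbr n α β :=
  tight_unique_outer_neighbor_general n hn α hαt
end

section
/- Let n ≥ 2 and let α be a tight stable n-set in ZMod (2n+2). Then α has exactly n + 2 neighbors in SG_{n,2}: the n + 1 tight stable n-sets all of whose elements have parity opposite to that of the elements of α, together with exactly one further neighbor, which is loose (namely the unique outer neighbor of α). -/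
/-!
Everything is governed by parity. With `c = i - 2`, the tight set `T(i)` is the parity class
of `i` with `c` removed, so its complement is `c` together with the opposite parity class `Q`,
which has `n + 1` elements, no two of them consecutive. A stable `n`-set disjoint from `T(i)`
either avoids `c`, and is then `Q` minus one point `y`, that is, the tight set `T(y + 2)`;
or it contains `c`, hence avoids `c ± 1`, and is then exactly `{c} ∪ Q \ {c - 1, c + 1}`, the
outer neighbor obtained by moving the last element `i - 4` of `T(i)` to `c`. For `n ≥ 2` this
set meets both parity classes, so it is loose.
-/

open Finset

lemma Finset.exists_eq_erase_of_subset_of_card_eq_succ {α : Type*} [DecidableEq α]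
    {s t : Finset α} (hst : s ⊆ t) (hcard : #t = #s + 1) : ∃ y ∈ t, s = t.erase y := by
  obtain ⟨y, hyt, hys⟩ := exists_of_ssubset (ssubset_of_subset_of_ne hst (by rintro rfl; omega))
  refine ⟨y, hyt, eq_of_subset_of_card_le (fun x hx => mem_erase.2 ⟨?_, hst hx⟩) ?_⟩
  · rintro rfl; exact hys hx
  · rw [card_erase_of_mem hyt]; omega

lemma ZMod.two_ne_zero_of_one_le {n : ℕ} (hn : 1 ≤ n) : (2 : ZMod (2 * n + 2)) ≠ 0 := by
  intro h
  have := (ZMod.natCast_eq_zero_iff 2 (2 * n + 2)).1 (by exact_mod_cast h)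
  have := Nat.le_of_dvd two_pos this
  omega

section

variable {n : ℕ}

lemma parity_add_one (x : ZMod (2 * n + 2)) : parity n (x + 1) = parity n x + 1 := by
  simp [parity]

lemma parity_sub (x y : ZMod (2 * n + 2)) : parity n (x - y) = parity n x - parity n y :=
  map_sub _ _ _

lemma parity_natCast (k : ℕ) : parity n k = k :=
  map_natCast _ _

lemma parity_sub_one (x : ZMod (2 * n + 2)) : parity n (x - 1) = parity n x + 1 := by
  simp only [parity, map_sub, map_one]
  reduce_mod_char

lemma parity_add_two_mul (x y : ZMod (2 * n + 2)) : parity n (x + 2 * y) = parity n x := by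
  simp only [parity, map_add, map_mul, map_ofNat]
  reduce_mod_char

lemma parity_sub_two (x : ZMod (2 * n + 2)) : parity n (x - 2) = parity n x := by
  simp only [parity, map_sub, map_ofNat]
  reduce_mod_char

lemma parity_add_two (x : ZMod (2 * n + 2)) : parity n (x + 2) = parity n x := by
  simpa using parity_add_two_mul x 1

lemma parity_ne_iff {x y : ZMod (2 * n + 2)} :
    parity n x ≠ parity n y ↔ parity n x = parity n y + 1 := by
  generalize parity n x = a, parity n y = b
  revert a b; decide

def parityClass (n : ℕ) (q : ZMod 2) : Finset (ZMod (2 * n + 2)) :=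
  univ.filter fun x => parity n x = q

@[simp]
lemma mem_parityClass {q : ZMod 2} {x : ZMod (2 * n + 2)} :
    x ∈ parityClass n q ↔ parity n x = q := by
  simp [parityClass]

lemma add_one_notMem_parityClass {q : ZMod 2} {x : ZMod (2 * n + 2)}
    (hx : x ∈ parityClass n q) : x + 1 ∉ parityClass n q := by
  rw [mem_parityClass] at hx ⊢
  rw [parity_add_one, hx]
  exact succ_ne_self q

lemma isStable_of_subset_parityClass {q : ZMod 2} {s : Finset (ZMod (2 * n + 2))}
    (hs : s ⊆ parityClass n q) (hcard : #s = n) : IsStable n s :=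
  ⟨hcard, fun _ hx => add_one_notMem_parityClass (hs hx.1) (hs hx.2)⟩

def tightSet (n : ℕ) (j : ZMod (2 * n + 2)) : Finset (ZMod (2 * n + 2)) :=
  (range n).image fun k : ℕ => j + 2 * (k : ZMod (2 * n + 2))

lemma isTight_iff {β : Finset (ZMod (2 * n + 2))} : IsTight n β ↔ ∃ j, β = tightSet n j :=
  Iff.rfl

lemma card_tightSet (j : ZMod (2 * n + 2)) : #(tightSet n j) = n := by
  rw [tightSet, card_image_of_injOn, card_range]
  intro k hk k' hk' h
  simp only [coe_range, Set.mem_Iio] at hk hk'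
  have hcast : ((2 * k : ℕ) : ZMod (2 * n + 2)) = ((2 * k' : ℕ) : ZMod (2 * n + 2)) := by
    exact_mod_cast add_left_cancel h
  have hval := congrArg ZMod.val hcast
  rwa [ZMod.val_natCast_of_lt (by omega), ZMod.val_natCast_of_lt (by omega),
    mul_left_cancel_iff_of_pos two_pos] at hval

lemma mem_tightSet {j x : ZMod (2 * n + 2)} :
    x ∈ tightSet n j ↔ parity n x = parity n j ∧ x ≠ j - 2 := by
  simp only [tightSet, mem_image, mem_range]
  constructor
  · rintro ⟨k, hk, rfl⟩
    refine ⟨parity_add_two_mul j k, fun h => ?_⟩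
    have hzero : ((2 * k + 2 : ℕ) : ZMod (2 * n + 2)) = 0 := by
      push_cast; linear_combination h
    have := Nat.le_of_dvd (by omega) ((ZMod.natCast_eq_zero_iff _ _).1 hzero)
    omega
  · rintro ⟨hpar, hne⟩
    obtain ⟨k, hk⟩ : Even (x - j).val := by
      rw [← ZMod.natCast_eq_zero_iff_even, ← parity_natCast, ZMod.natCast_zmod_val, parity_sub,
        hpar, sub_self]
    have hx : x = j + 2 * (k : ZMod (2 * n + 2)) := by
      have := ZMod.natCast_zmod_val (x - j)
      rw [hk] at this; push_cast at this; linear_combination -this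
    have hlt := ZMod.val_lt (x - j)
    refine ⟨k, ?_, hx.symm⟩
    by_contra hkn
    have hkn : k = n := by omega
    rw [hkn] at hx
    have hzero : (2 * n + 2 : ZMod (2 * n + 2)) = 0 := by exact_mod_cast ZMod.natCast_self _
    exact hne (by rw [hx]; linear_combination hzero)

lemma self_mem_tightSet (hn : 1 ≤ n) (j : ZMod (2 * n + 2)) : j ∈ tightSet n j :=
  mem_image.2 ⟨0, mem_range.2 (by omega), by simp⟩

lemma tightSet_eq_erase (j : ZMod (2 * n + 2)) :
    tightSet n j = (parityClass n (parity n j)).erase (j - 2) := by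
  ext x
  rw [mem_tightSet, mem_erase, mem_parityClass, and_comm]

lemma card_parityClass (q : ZMod 2) : #(parityClass n q) = n + 1 := by
  set j : ZMod (2 * n + 2) := (q.val : ZMod (2 * n + 2))
  have hj : parity n j = q := by rw [parity_natCast, ZMod.natCast_zmod_val]
  have hmem : j - 2 ∈ parityClass n (parity n j) := mem_parityClass.2 (parity_sub_two j)
  rw [← hj, ← card_erase_add_one hmem, ← tightSet_eq_erase, card_tightSet]

lemma isStable_erase_parityClass {q : ZMod 2} {y : ZMod (2 * n + 2)}
    (hy : y ∈ parityClass n q) : IsStable n ((parityClass n q).erase y) :=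
  isStable_of_subset_parityClass (erase_subset _ _)
    (by rw [card_erase_of_mem hy, card_parityClass]; rfl)

lemma erase_parityClass_eq_tightSet (y : ZMod (2 * n + 2)) :
    (parityClass n (parity n y)).erase y = tightSet n (y + 2) := by
  rw [tightSet_eq_erase, parity_add_two, add_sub_cancel_right]

lemma setOf_isTight_opposite (hn : 1 ≤ n) (i : ZMod (2 * n + 2)) :
    {β | IsStable n β ∧ IsTight n β ∧
        ∀ b ∈ β, ∀ a ∈ tightSet n i, parity n b ≠ parity n a} =
      (parityClass n (parity n i + 1)).erase '' (parityClass n (parity n i + 1)) := by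
  ext β
  constructor
  · rintro ⟨-, htight, hpar⟩
    obtain ⟨j, rfl⟩ := isTight_iff.1 htight
    have hj : parity n j = parity n i + 1 :=
      parity_ne_iff.1 (hpar j (self_mem_tightSet hn j) i (self_mem_tightSet hn i))
    refine ⟨j - 2, ?_, ?_⟩
    · rw [mem_coe, mem_parityClass, parity_sub_two, hj]
    · rw [tightSet_eq_erase, hj]
  · rintro ⟨y, hy, rfl⟩
    rw [mem_coe, mem_parityClass] at hy
    refine ⟨isStable_erase_parityClass (mem_parityClass.2 hy), isTight_iff.2 ⟨y + 2, ?_⟩,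
      fun b hb a ha => ?_⟩
    · rw [← hy, erase_parityClass_eq_tightSet]
    · rw [mem_parityClass.1 (mem_of_mem_erase hb), (mem_tightSet.1 ha).1]
      exact succ_ne_self _

def looseNbr (n : ℕ) (i : ZMod (2 * n + 2)) : Finset (ZMod (2 * n + 2)) :=
  insert (i - 2) (((parityClass n (parity n i + 1)).erase (i - 1)).erase (i - 3))

lemma mem_looseNbr {i x : ZMod (2 * n + 2)} :
    x ∈ looseNbr n i ↔
      x = i - 2 ∨ (x ≠ i - 3 ∧ x ≠ i - 1 ∧ parity n x = parity n i + 1) := by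
  simp [looseNbr]

lemma card_looseNbr (hn : 1 ≤ n) (i : ZMod (2 * n + 2)) : #(looseNbr n i) = n := by
  have h2 := ZMod.two_ne_zero_of_one_le hn
  rw [looseNbr, card_insert_of_notMem, card_erase_of_mem, card_erase_of_mem, card_parityClass]
  · omega
  · rw [mem_parityClass, parity_sub_one]
  · rw [mem_erase, mem_parityClass, show i - 3 = i - 2 - 1 by ring, parity_sub_one, parity_sub_two]
    exact ⟨fun h => h2 (by linear_combination -h), rfl⟩
  · simp [parity_sub_two]

lemma isStable_looseNbr (hn : 1 ≤ n) (i : ZMod (2 * n + 2)) : IsStable n (looseNbr n i) := by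
  refine ⟨card_looseNbr hn i, fun x ⟨hx, hx1⟩ => ?_⟩
  rw [mem_looseNbr] at hx hx1
  have hpar := parity_add_one x
  rcases hx with rfl | ⟨hx3, -, hxp⟩ <;> rcases hx1 with h | ⟨-, h1, h1p⟩
  · rw [h] at hpar
    exact succ_ne_self _ hpar.symm
  · exact h1 (by ring)
  · exact hx3 (by linear_combination h)
  · rw [h1p, hxp] at hpar
    exact succ_ne_self _ (add_right_cancel hpar).symm

lemma disjoint_tightSet_looseNbr (i : ZMod (2 * n + 2)) :
    Disjoint (tightSet n i) (looseNbr n i) := by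
  refine disjoint_left.2 fun x hx hx' => ?_
  rw [mem_tightSet] at hx
  rcases mem_looseNbr.1 hx' with h | ⟨-, -, h⟩
  · exact hx.2 h
  · rw [hx.1] at h
    exact succ_ne_self _ h.symm

lemma not_isTight_looseNbr (hn : 2 ≤ n) (i : ZMod (2 * n + 2)) : ¬IsTight n (looseNbr n i) := by
  intro htight
  obtain ⟨j, hj⟩ := isTight_iff.1 htight
  have hgap : i - 2 ∈ looseNbr n i := mem_insert_self _ _
  obtain ⟨y, hy⟩ : ((looseNbr n i).erase (i - 2)).Nonempty := by
    rw [← card_pos, card_erase_of_mem hgap, card_looseNbr (by omega)]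
    omega
  obtain ⟨hyne, hy⟩ := mem_erase.1 hy
  have hyp := ((mem_looseNbr.1 hy).resolve_left hyne).2.2
  rw [hj, mem_tightSet] at hgap hy
  rw [parity_sub_two] at hgap
  rw [hy.1, ← hgap.1] at hyp
  exact succ_ne_self _ hyp.symm

lemma mem_oplus {s : Finset (ZMod (2 * n + 2))} {j x : ZMod (2 * n + 2)} :
    x ∈ oplus n s j ↔ x - j ∈ s := by
  simp only [oplus, mem_image]
  constructor
  · rintro ⟨a, ha, rfl⟩
    rwa [add_sub_cancel_right]
  · exact fun h => ⟨x - j, h, sub_add_cancel x j⟩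

lemma outerNbr_looseNbr (hn : 1 ≤ n) (i : ZMod (2 * n + 2)) :
    OuterNbr n (tightSet n i) (looseNbr n i) := by
  have h2 := ZMod.two_ne_zero_of_one_le hn
  refine ⟨disjoint_tightSet_looseNbr i, i - 4, ?_, ?_⟩
  · rw [mem_tightSet, show i - 4 = i - 2 - 2 by ring, parity_sub_two, parity_sub_two]
    exact ⟨rfl, fun h => h2 (by linear_combination -h)⟩
  · ext x
    rw [mem_looseNbr, mem_union, mem_oplus, mem_erase, mem_tightSet, mem_singleton, parity_sub_one]
    grind

lemma setOf_disjoint_tightSet (hn : 1 ≤ n) (i : ZMod (2 * n + 2)) :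
    {β | IsStable n β ∧ Disjoint (tightSet n i) β} =
      insert (looseNbr n i)
        {β | IsStable n β ∧ IsTight n β ∧
          ∀ b ∈ β, ∀ a ∈ tightSet n i, parity n b ≠ parity n a} := by
  ext β
  constructor
  · rintro ⟨hst, hdisj⟩
    have hcompl : ∀ x ∈ β, x = i - 2 ∨ parity n x = parity n i + 1 := fun x hx => by
      have hx' := disjoint_right.1 hdisj hx
      rw [mem_tightSet, not_and_or, not_ne_iff] at hx'
      exact hx'.symm.imp_right parity_ne_iff.1
    by_cases hgap : i - 2 ∈ β
    · refine Or.inl (eq_of_subset_of_card_le (fun x hx => ?_) (by rw [card_looseNbr hn, hst.1]))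
      refine mem_looseNbr.2 ((hcompl x hx).imp_right fun hxp => ⟨?_, ?_, hxp⟩)
      · rintro rfl
        exact hst.2 _ ⟨hx, by convert hgap using 1; ring⟩
      · rintro rfl
        exact hst.2 _ ⟨hgap, by convert hx using 1; ring⟩
    · have hsub : β ⊆ parityClass n (parity n i + 1) := fun x hx =>
        mem_parityClass.2 ((hcompl x hx).resolve_left (by rintro rfl; exact hgap hx))
      obtain ⟨y, hy, rfl⟩ :=
        exists_eq_erase_of_subset_of_card_eq_succ hsub (by rw [card_parityClass, hst.1])
      exact Or.inr (setOf_isTight_opposite hn i ▸ ⟨y, hy, rfl⟩)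
  · rintro (rfl | ⟨hst, -, hpar⟩)
    · exact ⟨isStable_looseNbr hn i, disjoint_tightSet_looseNbr i⟩
    · exact ⟨hst, disjoint_left.2 fun a ha hb => hpar a hb a ha rfl⟩

end

theorem tight_neighbors_general (n : ℕ) (hn : 2 ≤ n)
    (α : Finset (ZMod (2 * n + 2))) (hαt : IsTight n α) :
    ∃ η : Finset (ZMod (2 * n + 2)),
      IsStable n η ∧ ¬ IsTight n η ∧ OuterNbr n α η ∧
      {β | IsStable n β ∧ Disjoint α β} =
        insert η {β | IsStable n β ∧ IsTight n β ∧
          ∀ b ∈ β, ∀ a ∈ α, parity n b ≠ parity n a} ∧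
      {β : Finset (ZMod (2 * n + 2)) | IsStable n β ∧ IsTight n β ∧
          ∀ b ∈ β, ∀ a ∈ α, parity n b ≠ parity n a}.ncard = n + 1 ∧
      {β : Finset (ZMod (2 * n + 2)) | IsStable n β ∧ Disjoint α β}.ncard = n + 2 := by
  obtain ⟨i, rfl⟩ := isTight_iff.1 hαt
  have hn1 : 1 ≤ n := by omega
  have hopposite : {β | IsStable n β ∧ IsTight n β ∧
      ∀ b ∈ β, ∀ a ∈ tightSet n i, parity n b ≠ parity n a}.ncard = n + 1 := by
    rw [setOf_isTight_opposite hn1, (erase_injOn _).ncard_image, Set.ncard_coe_finset,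
      card_parityClass]
  refine ⟨looseNbr n i, isStable_looseNbr hn1 i, not_isTight_looseNbr hn i,
    outerNbr_looseNbr hn1 i, setOf_disjoint_tightSet hn1 i, hopposite, ?_⟩
  rw [setOf_disjoint_tightSet hn1,
    Set.ncard_insert_of_notMem fun h => not_isTight_looseNbr hn i h.2.1, hopposite]

/-- For `n ≥ 2`, a tight stable n-set `α` has exactly `n + 2` neighbors in
`SG_{n,2}`: the `n + 1` tight stable n-sets of opposite parity, together with
exactly one further neighbor, which is loose (the unique outer neighbor). -/
theorem tight_neighbors (n : ℕ) (hn : 2 ≤ n)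
    (α : Finset (ZMod (2 * n + 2))) (hα : IsStable n α) (hαt : IsTight n α) :
    ∃ η : Finset (ZMod (2 * n + 2)),
      IsStable n η ∧ ¬ IsTight n η ∧ OuterNbr n α η ∧
      {β | IsStable n β ∧ Disjoint α β} =
        insert η {β | IsStable n β ∧ IsTight n β ∧
          ∀ b ∈ β, ∀ a ∈ α, parity n b ≠ parity n a} ∧
      {β : Finset (ZMod (2 * n + 2)) | IsStable n β ∧ IsTight n β ∧
          ∀ b ∈ β, ∀ a ∈ α, parity n b ≠ parity n a}.ncard = n + 1 ∧
      {β : Finset (ZMod (2 * n + 2)) | IsStable n β ∧ Disjoint α β}.ncard = n + 2 :=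
  tight_neighbors_general n hn α hαt
end

section
/- Let n ≥ 1 and 0 ≤ i ≤ n. Let α⁰ be the subset of ZMod (2n+2) consisting of the n − i odd elements 1, 3, …, 2(n−i)−1 together with the i even elements 2(n−i)+2, 2(n−i)+4, …, 2n. Then P_i = {α⁰ ⊖ 2j : 0 ≤ j ≤ n}, the n + 1 sets α⁰ ⊖ 2j for 0 ≤ j ≤ n are pairwise distinct, and consequently |P_i| = n + 1. -/
/-!
Shifting by an even element preserves stability and both parity counts, so `P_i` is a union of
orbits of the shifts `α ↦ α ⊖ 2j`. An `n`-set misses one of the `n + 1` pairs `{2m - 1, 2m}`, so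
some shift of it misses `{-1, 0}` and lies in `{1, …, 2n}`. A stable `n`-set there meets each pair
`{2m + 1, 2m + 2}` exactly once, and stability forces its odd elements to come first; the number
of odd elements then pins it down as `α⁰`. The shifts are distinct because `⊖ 2j` adds `2j` to the
sum of an `n`-set, as `n • 2 = -2` in `ZMod (2n+2)`.
-/

open Finset

theorem Finset.eq_range_card_of_add_one_mem {O : Finset ℕ} (h : ∀ m, m + 1 ∈ O → m ∈ O) :
    O = range #O := by
  have down : ∀ m ∈ O, ∀ l ≤ m, l ∈ O := fun m hm l hl =>
    Nat.decreasingInduction (fun k _ hk => h k hk) hm hl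
  ext m
  rw [mem_range]
  constructor
  · intro hm
    have : range (m + 1) ⊆ O := fun l hl => down m hm l (Nat.lt_succ_iff.1 (mem_range.1 hl))
    simpa using card_le_card this
  · intro hm
    by_contra hmO
    have : O ⊆ range m := fun l hl => mem_range.2 <|
      Nat.lt_of_not_le fun hml => hmO (down l hl m hml)
    have := card_le_card this
    rw [card_range] at this
    omega

namespace StableKneser

def oddsThenEvens (k l : ℕ) : Finset ℕ :=
  (range k).image (fun m => 2 * m + 1) ∪ (range l).image (fun m => 2 * k + 2 * m + 2)

variable {k l n i v : ℕ} {S : Finset ℕ} {α : Finset (ZMod (2 * n + 2))}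

theorem mem_oddsThenEvens :
    v ∈ oddsThenEvens k l ↔
      (v % 2 = 1 ∧ v < 2 * k) ∨ (v % 2 = 0 ∧ 2 * k + 2 ≤ v ∧ v ≤ 2 * (k + l)) := by
  simp only [oddsThenEvens, mem_union, mem_image, mem_range]
  constructor
  · rintro (⟨m, hm, rfl⟩ | ⟨m, hm, rfl⟩) <;> omega
  · rintro (h | h)
    · exact Or.inl ⟨v / 2, by omega, by omega⟩
    · exact Or.inr ⟨(v - 2 * k - 2) / 2, by omega, by omega⟩

theorem card_oddsThenEvens : #(oddsThenEvens k l) = k + l := by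
  rw [oddsThenEvens, card_union_of_disjoint, card_image_of_injective, card_image_of_injective,
    card_range, card_range]
  · exact fun a b h => by simpa using h
  · exact fun a b h => by simpa using h
  · simp only [disjoint_left, mem_image, mem_range]
    omega

theorem filter_odd_oddsThenEvens :
    (oddsThenEvens k l).filter Odd = (range k).image (fun m => 2 * m + 1) := by
  ext v
  simp only [mem_filter, mem_oddsThenEvens, mem_image, mem_range, Nat.odd_iff]
  constructor
  · rintro ⟨h, hodd⟩
    exact ⟨v / 2, by omega, by omega⟩
  · rintro ⟨m, hm, rfl⟩
    omega

theorem card_filter_odd_oddsThenEvens : #((oddsThenEvens k l).filter Odd) = k := by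
  rw [filter_odd_oddsThenEvens, card_image_of_injective _ (fun a b h => by simpa using h),
    card_range]

theorem add_one_notMem_oddsThenEvens (hv : v ∈ oddsThenEvens k l) :
    v + 1 ∉ oddsThenEvens k l := by
  rw [mem_oddsThenEvens] at hv ⊢
  omega

/-- Pigeonhole: the `n` elements of `S` lie in distinct pairs `{2m+1, 2m+2}`, `m < n`. -/
theorem mem_or_mem_of_card_eq (hS : ∀ v ∈ S, 1 ≤ v ∧ v ≤ 2 * n) (hcard : #S = n)
    (hsep : ∀ v ∈ S, v + 1 ∉ S) {m : ℕ} (hm : m < n) : 2 * m + 1 ∈ S ∨ 2 * m + 2 ∈ S := by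
  have hinj : Set.InjOn (fun v => (v - 1) / 2) S := by
    intro u hu w hw huw
    by_contra hne
    have := hS u hu
    have := hS w hw
    simp only at huw
    rcases (by omega : w = u + 1 ∨ u = w + 1) with rfl | rfl
    exacts [hsep u hu hw, hsep w hw hu]
  have himage : S.image (fun v => (v - 1) / 2) = range n := by
    refine eq_of_subset_of_card_le (fun x hx => ?_) ?_
    · obtain ⟨v, hv, rfl⟩ := mem_image.1 hx
      have := hS v hv
      exact mem_range.2 (by omega)
    · rw [card_image_of_injOn hinj, card_range, hcard]
  obtain ⟨v, hv, hvm⟩ := mem_image.1 (himage ▸ mem_range.2 hm)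
  obtain rfl | rfl : v = 2 * m + 1 ∨ v = 2 * m + 2 := by have := hS v hv; omega
  exacts [Or.inl hv, Or.inr hv]

theorem eq_oddsThenEvens (hS : ∀ v ∈ S, 1 ≤ v ∧ v ≤ 2 * n) (hcard : #S = n)
    (hsep : ∀ v ∈ S, v + 1 ∉ S) :
    S = oddsThenEvens #(S.filter Odd) (n - #(S.filter Odd)) := by
  set O := (range n).filter (fun m => 2 * m + 1 ∈ S)
  have hO_down : ∀ m, m + 1 ∈ O → m ∈ O := by
    simp only [O, mem_filter, mem_range]
    refine fun m ⟨hm, hodd⟩ => ⟨by omega, ?_⟩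
    refine (mem_or_mem_of_card_eq hS hcard hsep (m := m) (by omega)).resolve_right fun heven => ?_
    exact hsep _ heven (by rwa [show 2 * m + 2 + 1 = 2 * (m + 1) + 1 by omega])
  have hk_eq : #(S.filter Odd) = #O := by
    rw [← card_image_of_injective O (f := fun m => 2 * m + 1) (fun a b h => by simpa using h)]
    congr 1
    ext v
    simp only [O, mem_filter, mem_image, mem_range, Nat.odd_iff]
    constructor
    · rintro ⟨hv, hodd⟩
      have := hS v hv
      exact ⟨v / 2, ⟨by omega, by rwa [show 2 * (v / 2) + 1 = v by omega]⟩, by omega⟩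
    · rintro ⟨m, ⟨-, hm⟩, rfl⟩
      exact ⟨hm, by omega⟩
  set k := #(S.filter Odd)
  have hk : k ≤ n := by
    rw [← hcard]
    exact card_filter_le _ _
  have hO : ∀ m < n, 2 * m + 1 ∈ S ↔ m < k := by
    intro m hm
    rw [hk_eq, ← mem_range, ← Finset.eq_range_card_of_add_one_mem hO_down]
    simp [O, hm]
  ext v
  rw [mem_oddsThenEvens]
  constructor
  · intro hv
    have := hS v hv
    obtain ⟨m, rfl | rfl⟩ := Nat.even_or_odd' v
    · have : 2 * (m - 1) + 1 ∉ S := fun h =>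
        hsep _ h (by rwa [show 2 * (m - 1) + 1 + 1 = 2 * m by omega])
      rw [hO _ (by omega)] at this
      omega
    · have := (hO m (by omega)).1 hv
      omega
  · rintro (⟨hodd, hv⟩ | ⟨heven, hv, hvn⟩)
    · have := (hO (v / 2) (by omega)).2 (by omega)
      rwa [show 2 * (v / 2) + 1 = v by omega] at this
    · have hodd : 2 * (v / 2 - 1) + 1 ∉ S := by rw [hO _ (by omega)]; omega
      have := (mem_or_mem_of_card_eq hS hcard hsep (m := v / 2 - 1) (by omega)).resolve_left hodd
      rwa [show 2 * (v / 2 - 1) + 2 = v by omega] at this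

theorem parity_natCast (v : ℕ) : parity n v = v := map_natCast _ v

theorem parity_add (a b : ZMod (2 * n + 2)) : parity n (a + b) = parity n a + parity n b :=
  map_add _ a b

theorem parity_neg (a : ZMod (2 * n + 2)) : parity n (-a) = -parity n a := map_neg _ a

theorem parity_eq_zero_iff {e : ZMod (2 * n + 2)} :
    parity n e = 0 ↔ ∃ j ≤ n, e = ((2 * j : ℕ) : ZMod (2 * n + 2)) := by
  constructor
  · intro he
    obtain ⟨j, hj⟩ : Even e.val := by
      rwa [← ZMod.natCast_eq_zero_iff_even, ← parity_natCast, ZMod.natCast_zmod_val]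
    refine ⟨j, by have := ZMod.val_lt e; omega, ?_⟩
    rw [← ZMod.natCast_zmod_val e, hj, ← two_mul]
  · rintro ⟨j, -, rfl⟩
    rw [parity_natCast, ZMod.natCast_eq_zero_iff_even]
    exact even_two_mul j

theorem natCast_injOn : Set.InjOn (Nat.cast : ℕ → ZMod (2 * n + 2)) (Set.Iio (2 * n + 2)) :=
  fun u hu w hw h => by rw [← ZMod.val_cast_of_lt hu, h, ZMod.val_cast_of_lt hw]

theorem natCast_two_mul_add_one : ((2 * n + 1 : ℕ) : ZMod (2 * n + 2)) = -1 := by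
  rw [eq_neg_iff_add_eq_zero]
  exact_mod_cast ZMod.natCast_self (2 * n + 2)

theorem card_filter_parity_eq_zero :
    #(univ.filter fun a : ZMod (2 * n + 2) => parity n a = 0) = n + 1 := by
  have : univ.filter (fun a : ZMod (2 * n + 2) => parity n a = 0) =
      (range (n + 1)).image (fun j => ((2 * j : ℕ) : ZMod (2 * n + 2))) := by
    ext e
    simp [parity_eq_zero_iff, eq_comm]
  rw [this, card_image_of_injOn, card_range]
  intro a ha b hb h
  have := natCast_injOn (n := n) (by simp at ha ⊢; omega) (by simp at hb ⊢; omega) h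
  omega

theorem exists_even_notMem_of_card_le (α : Finset (ZMod (2 * n + 2))) (hα : #α ≤ n) :
    ∃ e, parity n e = 0 ∧ e ∉ α ∧ e - 1 ∉ α := by
  classical
  let f : ZMod (2 * n + 2) → ZMod (2 * n + 2) := fun a => if parity n a = 0 then a else a + 1
  have hf : α.image f ⊆ univ.filter fun a => parity n a = 0 := by
    intro b hb
    obtain ⟨a, -, rfl⟩ := mem_image.1 hb
    simp only [f, mem_filter, mem_univ, true_and]
    split_ifs with ha
    · exact ha
    · rw [parity_add, ← Nat.cast_one, parity_natCast]
      exact (by decide : ∀ x : ZMod 2, x ≠ 0 → x + 1 = 0) _ ha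
  have hcard : #(α.image f) < #(univ.filter fun a => parity n a = 0) := by
    rw [card_filter_parity_eq_zero]
    exact (card_image_le.trans hα).trans_lt n.lt_succ_self
  obtain ⟨e, he, hne⟩ := exists_mem_notMem_of_card_lt_card hcard
  have he0 : parity n e = 0 := (mem_filter.1 he).2
  refine ⟨e, he0, fun h => hne (mem_image.2 ⟨e, h, if_pos he0⟩), fun h => hne ?_⟩
  have : parity n (e - 1) ≠ 0 := by
    rw [sub_eq_add_neg, parity_add, parity_neg, he0, ← Nat.cast_one, parity_natCast]
    decide
  exact mem_image.2 ⟨e - 1, h, by simp [f, this]⟩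

theorem mem_ominus {j x : ZMod (2 * n + 2)} : x ∈ ominus n α j ↔ x + j ∈ α := by
  simp only [ominus, mem_image, sub_eq_iff_eq_add]
  exact ⟨by rintro ⟨a, ha, rfl⟩; exact ha, fun h => ⟨_, h, rfl⟩⟩

theorem card_ominus (j : ZMod (2 * n + 2)) : #(ominus n α j) = #α :=
  card_image_of_injective _ sub_left_injective

theorem ominus_ominus (a b : ZMod (2 * n + 2)) :
    ominus n (ominus n α a) b = ominus n α (a + b) := by
  ext x
  rw [mem_ominus, mem_ominus, mem_ominus, add_assoc, add_comm b]

theorem ominus_zero : ominus n α 0 = α := by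
  simp [ominus]

theorem sum_ominus (j : ZMod (2 * n + 2)) :
    ∑ x ∈ ominus n α j, x = ∑ x ∈ α, x - #α • j := by
  rw [ominus, sum_image fun _ _ _ _ h => sub_left_injective h, sum_sub_distrib, sum_const]

theorem isStable_ominus (h : IsStable n α) (j : ZMod (2 * n + 2)) : IsStable n (ominus n α j) :=
  ⟨(card_ominus j).trans h.1, fun x ⟨hx, hx1⟩ =>
    h.2 (x + j) ⟨mem_ominus.1 hx, by rw [add_right_comm]; exact mem_ominus.1 hx1⟩⟩

theorem filter_parity_ominus {j : ZMod (2 * n + 2)} (hj : parity n j = 0) (c : ZMod 2) :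
    (ominus n α j).filter (fun a => parity n a = c) =
      ominus n (α.filter fun a => parity n a = c) j := by
  ext x
  simp [mem_ominus, parity_add, hj]

theorem ominus_mem_Pset (h : α ∈ Pset n i) {j : ZMod (2 * n + 2)} (hj : parity n j = 0) :
    ominus n α j ∈ Pset n i :=
  ⟨isStable_ominus h.1 j, by rw [filter_parity_ominus hj, card_ominus]; exact h.2.1,
    by rw [filter_parity_ominus hj, card_ominus]; exact h.2.2⟩

theorem mem_Pset_iff (hi : i ≤ n) :
    α ∈ Pset n i ↔ IsStable n α ∧ #(α.filter fun a => parity n a = 1) = n - i := by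
  refine ⟨fun h => ⟨h.1, h.2.2⟩, fun ⟨h, hodd⟩ => ⟨h, ?_, hodd⟩⟩
  have hsplit := card_filter_add_card_filter_not (s := α) (fun a => parity n a = 0)
  have hne : ∀ x : ZMod 2, ¬x = 0 ↔ x = 1 := by decide
  simp only [hne] at hsplit
  have hcard : #α = n := h.1
  omega

theorem ominus_two_mul_injOn (hα : #α = n) :
    Set.InjOn (fun j : ℕ => ominus n α ((2 * j : ℕ) : ZMod (2 * n + 2))) (Set.Iic n) := by
  have hsum (j : ℕ) :
      ∑ x ∈ ominus n α ((2 * j : ℕ) : ZMod (2 * n + 2)), x = ∑ x ∈ α, x + (2 * j : ℕ) := by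
    have hzero : ((2 * n + 2 : ℕ) : ZMod (2 * n + 2)) = 0 := ZMod.natCast_self _
    rw [sum_ominus, hα, nsmul_eq_mul]
    push_cast at hzero ⊢
    linear_combination (-(j : ZMod (2 * n + 2))) * hzero
  intro j₁ h₁ j₂ h₂ h
  have := congrArg (fun s => ∑ x ∈ s, x) h
  simp only [hsum, add_right_inj] at this
  have := natCast_injOn (n := n) (by simp at h₁ ⊢; omega) (by simp at h₂ ⊢; omega) this
  omega

theorem isStable_image_natCast_iff (hS : ∀ v ∈ S, v ≤ 2 * n) :
    IsStable n (S.image Nat.cast) ↔ #S = n ∧ ∀ v ∈ S, v + 1 ∉ S := by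
  have hS' : (S : Set ℕ) ⊆ Set.Iio (2 * n + 2) := fun v hv => by
    have := hS v hv; simp only [Set.mem_Iio]; omega
  rw [IsStable, card_image_of_injOn (natCast_injOn.mono hS')]
  refine and_congr_right fun _ => ⟨fun h v hv hv1 => h v ⟨mem_image_of_mem _ hv, ?_⟩, ?_⟩
  · exact_mod_cast mem_image_of_mem Nat.cast hv1
  · rintro h a ⟨ha, ha1⟩
    obtain ⟨u, hu, rfl⟩ := mem_image.1 ha
    obtain ⟨w, hw, hwu⟩ := mem_image.1 ha1
    have hu' := hS u hu
    obtain rfl : w = u + 1 := natCast_injOn (hS' hw) (by simp only [Set.mem_Iio]; omega)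
      (by push_cast; exact hwu)
    exact h u hu hw

theorem card_filter_parity_image_natCast (hS : ∀ v ∈ S, v ≤ 2 * n) :
    #((S.image Nat.cast).filter fun a : ZMod (2 * n + 2) => parity n a = 1) = #(S.filter Odd) := by
  rw [filter_image, card_image_of_injOn]
  · simp only [parity_natCast, ZMod.natCast_eq_one_iff_odd]
  · refine natCast_injOn.mono fun v hv => ?_
    have := hS v (mem_filter.1 hv).1
    simp only [Set.mem_Iio]
    omega

theorem image_natCast_oddsThenEvens_mem_Pset (hi : i ≤ n) :
    (oddsThenEvens (n - i) i).image (Nat.cast : ℕ → ZMod (2 * n + 2)) ∈ Pset n i := by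
  have hT : ∀ v ∈ oddsThenEvens (n - i) i, v ≤ 2 * n := fun v hv => by
    rw [mem_oddsThenEvens] at hv; omega
  rw [mem_Pset_iff hi, isStable_image_natCast_iff hT, card_filter_parity_image_natCast hT,
    card_oddsThenEvens, card_filter_odd_oddsThenEvens]
  exact ⟨⟨by omega, fun v hv => add_one_notMem_oddsThenEvens hv⟩, rfl⟩

theorem eq_image_natCast_oddsThenEvens (hi : i ≤ n) {β : Finset (ZMod (2 * n + 2))}
    (hβ : β ∈ Pset n i) (h0 : 0 ∉ β) (h1 : -1 ∉ β) :
    β = (oddsThenEvens (n - i) i).image Nat.cast := by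
  set S := β.image ZMod.val
  have hβS : β = S.image Nat.cast := by simp [S, image_image, Function.comp_def]
  have hS : ∀ v ∈ S, 1 ≤ v ∧ v ≤ 2 * n := by
    intro v hv
    obtain ⟨a, ha, rfl⟩ := mem_image.1 hv
    have hne0 : a.val ≠ 0 := fun h => h0 ((ZMod.val_eq_zero a).1 h ▸ ha)
    have hne1 : a.val ≠ 2 * n + 1 := fun h =>
      h1 (by rwa [← ZMod.natCast_zmod_val a, h, natCast_two_mul_add_one] at ha)
    have := ZMod.val_lt a
    omega
  rw [hβS, mem_Pset_iff hi, isStable_image_natCast_iff fun v hv => (hS v hv).2,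
    card_filter_parity_image_natCast fun v hv => (hS v hv).2] at hβ
  obtain ⟨⟨hcard, hsep⟩, hodd⟩ := hβ
  rw [hβS, eq_oddsThenEvens hS hcard hsep, hodd, Nat.sub_sub_self hi]

theorem exists_eq_ominus_of_mem_Pset (hi : i ≤ n) {β : Finset (ZMod (2 * n + 2))}
    (hβ : β ∈ Pset n i) :
    ∃ j ≤ n, β = ominus n ((oddsThenEvens (n - i) i).image Nat.cast) ((2 * j : ℕ) : ZMod _) := by
  obtain ⟨e, he, he0, he1⟩ := exists_even_notMem_of_card_le β hβ.1.1.le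
  obtain ⟨j, hj, hje⟩ : ∃ j ≤ n, -e = ((2 * j : ℕ) : ZMod (2 * n + 2)) := by
    rw [← parity_eq_zero_iff, parity_neg, he, neg_zero]
  have hγ := eq_image_natCast_oddsThenEvens hi (ominus_mem_Pset hβ he)
    (by rwa [mem_ominus, zero_add]) (by rwa [mem_ominus, neg_add_eq_sub])
  refine ⟨j, hj, ?_⟩
  rw [← hje, ← hγ, ominus_ominus, add_neg_cancel, ominus_zero]

end StableKneser

open StableKneser in
theorem Pset_eq_shifts_general (n i : ℕ) (hi : i ≤ n)
    (α0 : Finset (ZMod (2 * n + 2)))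
    (hα0 : α0 = ((Finset.range (n - i)).image
        (fun k => ((2 * k + 1 : ℕ) : ZMod (2 * n + 2)))) ∪
      ((Finset.range i).image
        (fun k => ((2 * (n - i) + 2 * k + 2 : ℕ) : ZMod (2 * n + 2))))) :
    Pset n i = {β | ∃ j ≤ n, β = ominus n α0 ((2 * j : ℕ) : ZMod (2 * n + 2))} ∧
    (∀ j₁ ≤ n, ∀ j₂ ≤ n,
      ominus n α0 ((2 * j₁ : ℕ) : ZMod (2 * n + 2)) =
        ominus n α0 ((2 * j₂ : ℕ) : ZMod (2 * n + 2)) → j₁ = j₂) ∧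
    (Pset n i).ncard = n + 1 := by
  replace hα0 : α0 = (oddsThenEvens (n - i) i).image Nat.cast := by
    rw [hα0, oddsThenEvens, image_union, image_image, image_image]
    rfl
  have hP0 : α0 ∈ Pset n i := hα0 ▸ image_natCast_oddsThenEvens_mem_Pset hi
  have hinj := ominus_two_mul_injOn hP0.1.1
  have hset : Pset n i =
      (fun j : ℕ => ominus n α0 ((2 * j : ℕ) : ZMod (2 * n + 2))) '' Set.Iic n := by
    ext β
    constructor
    · intro hβ
      obtain ⟨j, hj, rfl⟩ := hα0 ▸ exists_eq_ominus_of_mem_Pset hi hβ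
      exact ⟨j, hj, rfl⟩
    · rintro ⟨j, hj, rfl⟩
      exact ominus_mem_Pset hP0 (parity_eq_zero_iff.2 ⟨j, hj, rfl⟩)
  refine ⟨?_, fun j₁ h₁ j₂ h₂ h => hinj h₁ h₂ h, ?_⟩
  · rw [hset]
    ext β
    simp [eq_comm]
  · rw [hset, hinj.ncard_image, Set.ncard_Iic_nat]

/-- `P_i` consists of the `n + 1` pairwise-distinct sets `α⁰ ⊖ 2j`, `0 ≤ j ≤ n`,
where `α⁰ = {1, 3, …, 2(n-i)-1} ∪ {2(n-i)+2, 2(n-i)+4, …, 2n}`. -/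
theorem Pset_eq_shifts (n i : ℕ) (hn : 1 ≤ n) (hi : i ≤ n)
    (α0 : Finset (ZMod (2 * n + 2)))
    (hα0 : α0 = ((Finset.range (n - i)).image
        (fun k => ((2 * k + 1 : ℕ) : ZMod (2 * n + 2)))) ∪
      ((Finset.range i).image
        (fun k => ((2 * (n - i) + 2 * k + 2 : ℕ) : ZMod (2 * n + 2))))) :
    Pset n i = {β | ∃ j ≤ n, β = ominus n α0 ((2 * j : ℕ) : ZMod (2 * n + 2))} ∧
    (∀ j₁ ≤ n, ∀ j₂ ≤ n,
      ominus n α0 ((2 * j₁ : ℕ) : ZMod (2 * n + 2)) =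
        ominus n α0 ((2 * j₂ : ℕ) : ZMod (2 * n + 2)) → j₁ = j₂) ∧
    (Pset n i).ncard = n + 1 :=
  Pset_eq_shifts_general n i hi α0 hα0
end
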